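/- arXiv:2008.10440 — 3 statements merged into one kernel-verified Lean document; each statement's English description precedes it below -/
import Mathlib

section
/- (Generalized Csiszar–Kullback inequality) Let (Ω, Σ, μ) be a probability space, let g ∈ L¹(μ) be strictly positive a.e. with ∫ g dμ = 1, and let f ∈ L¹(μ) with f ≥ 0 a.e. Then 0 ≤ (1 + ‖f − g‖_{L¹(μ)})·(log(1 + ‖f − g‖_{L¹(μ)}) − 1) + 1 ≤ ∫_Ω (f·log(f/g) − f + g) dμ. -/
/-!
With `t = f / g`, the integrand is `g * klFun t` where `klFun u = u log u + 1 - u`, and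
`∫ |f - g| dμ = ∫ g |t - 1| dμ`. Pointwise, `klFun t ≥ klFun (1 + |t - 1|)`: equality for `t ≥ 1`,
and for `t ≤ 1` the map `t ↦ klFun t - klFun (2 - t)` has derivative `log (t (2 - t)) ≤ 0` on
`[0, 1]` and vanishes at `1`. Bounding `klFun (1 + |t - 1|)` below by the tangent line of the convex
function `klFun` at `1 + ‖f - g‖₁` and integrating against the probability density `g` gives
`klFun (1 + ‖f - g‖₁)`, which is the left-hand side.
-/

open MeasureTheory Real InformationTheory Set

lemma mul_log_div {a b : ℝ} (hb : b ≠ 0) : a * log (a / b) = a * log a - a * log b := by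
  rcases eq_or_ne a 0 with rfl | ha
  · simp
  · rw [log_div ha hb]; ring

lemma mul_klFun_div {a b : ℝ} (hb : b ≠ 0) : b * klFun (a / b) = a * log (a / b) - a + b := by
  rw [klFun_apply]
  field_simp
  ring

lemma klFun_add_log_mul_sub_le {a b : ℝ} (ha : 0 ≤ a) (hb : 0 < b) :
    klFun b + log b * (a - b) ≤ klFun a := by
  have h := mul_nonneg hb.le (klFun_nonneg (div_nonneg ha hb.le))
  rw [mul_klFun_div hb.ne', mul_log_div hb.ne'] at h
  simp only [klFun_apply]
  linarith

lemma klFun_two_sub_le {t : ℝ} (ht₀ : 0 ≤ t) (ht₁ : t ≤ 1) : klFun (2 - t) ≤ klFun t := by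
  have hanti : AntitoneOn (fun u => klFun u - klFun (2 - u)) (Icc 0 1) := by
    refine antitoneOn_of_hasDerivWithinAt_nonpos (f' := fun u => log (u * (2 - u)))
      (convex_Icc 0 1) (by fun_prop) (fun u hu => ?_) (fun u hu => ?_) <;>
      obtain ⟨hu₀, hu₁⟩ : u ∈ Ioo 0 1 := by rwa [interior_Icc] at hu
    · have h2u : 2 - u ≠ 0 := by linarith
      have hderiv := (hasDerivAt_klFun hu₀.ne').sub
        ((hasDerivAt_klFun h2u).comp u ((hasDerivAt_id u).const_sub 2))
      rw [log_mul hu₀.ne' h2u]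
      exact (hderiv.congr_deriv (by simp)).hasDerivWithinAt
    · exact log_nonpos (by nlinarith) (by nlinarith)
  have h := hanti ⟨ht₀, ht₁⟩ ⟨zero_le_one, le_rfl⟩ ht₁
  norm_num at h
  linarith

lemma klFun_one_add_abs_sub_one_le {t : ℝ} (ht : 0 ≤ t) : klFun (1 + |t - 1|) ≤ klFun t := by
  rcases le_total 1 t with h | h
  · rw [abs_of_nonneg (by linarith), add_sub_cancel]
  · rw [abs_of_nonpos (by linarith), show 1 + -(t - 1) = 2 - t by ring]
    exact klFun_two_sub_le ht h

lemma mul_klFun_one_add_add_log_mul_le {a b s : ℝ} (ha : 0 ≤ a) (hb : 0 < b) (hs : 0 ≤ s) :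
    b * klFun (1 + s) + log (1 + s) * (|a - b| - s * b) ≤ a * log (a / b) - a + b := by
  have hdist : |a / b - 1| * b = |a - b| := by
    rw [← abs_of_pos hb, ← abs_mul, abs_of_pos hb, sub_mul, div_mul_cancel₀ _ hb.ne', one_mul]
  have key : klFun (1 + s) + log (1 + s) * (|a / b - 1| - s) ≤ klFun (a / b) := calc
    _ = klFun (1 + s) + log (1 + s) * ((1 + |a / b - 1|) - (1 + s)) := by ring
    _ ≤ klFun (1 + |a / b - 1|) := klFun_add_log_mul_sub_le (by positivity) (by positivity)
    _ ≤ klFun (a / b) := klFun_one_add_abs_sub_one_le (div_nonneg ha hb.le)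
  rw [← mul_klFun_div hb.ne', ← hdist]
  linarith [mul_le_mul_of_nonneg_left key hb.le]

theorem generalized_csiszar_kullback_general {Ω : Type*} [MeasurableSpace Ω]
    (μ : Measure Ω)
    (f g : Ω → ℝ) (hf : Integrable f μ) (hg : Integrable g μ)
    (hg0 : ∀ᵐ x ∂μ, 0 < g x) (hgint : ∫ x, g x ∂μ = 1)
    (hf0 : ∀ᵐ x ∂μ, 0 ≤ f x)
    (hent : Integrable (fun x => f x * Real.log (f x / g x) - f x + g x) μ) :
    0 ≤ (1 + ∫ x, |f x - g x| ∂μ) * (Real.log (1 + ∫ x, |f x - g x| ∂μ) - 1) + 1 ∧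
    (1 + ∫ x, |f x - g x| ∂μ) * (Real.log (1 + ∫ x, |f x - g x| ∂μ) - 1) + 1
      ≤ ∫ x, (f x * Real.log (f x / g x) - f x + g x) ∂μ := by
  set s := ∫ x, |f x - g x| ∂μ
  have hs : 0 ≤ s := integral_nonneg fun x => abs_nonneg _
  have hlhs : (1 + s) * (log (1 + s) - 1) + 1 = klFun (1 + s) := by rw [klFun_apply]; ring
  rw [hlhs]
  refine ⟨klFun_nonneg (by positivity), ?_⟩
  have habs : Integrable (fun x => |f x - g x|) μ := (hf.sub hg).abs
  have hdev : Integrable (fun x => |f x - g x| - s * g x) μ := habs.sub (hg.const_mul s)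
  have hlower : ∫ x, (g x * klFun (1 + s) + log (1 + s) * (|f x - g x| - s * g x)) ∂μ
      = klFun (1 + s) := by
    rw [integral_add (hg.mul_const _) (hdev.const_mul _), integral_const_mul,
      integral_sub habs (hg.const_mul s), integral_mul_const, integral_const_mul, hgint]
    ring
  rw [← hlower]
  refine integral_mono_ae ((hg.mul_const _).add (hdev.const_mul _)) hent ?_
  filter_upwards [hf0, hg0] with x hfx hgx
  exact mul_klFun_one_add_add_log_mul_le hfx hgx hs

theorem generalized_csiszar_kullback {Ω : Type*} [MeasurableSpace Ω]
    (μ : Measure Ω) [IsProbabilityMeasure μ]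
    (f g : Ω → ℝ) (hf : Integrable f μ) (hg : Integrable g μ)
    (hg0 : ∀ᵐ x ∂μ, 0 < g x) (hgint : ∫ x, g x ∂μ = 1)
    (hf0 : ∀ᵐ x ∂μ, 0 ≤ f x)
    (hent : Integrable (fun x => f x * Real.log (f x / g x) - f x + g x) μ) :
    0 ≤ (1 + ∫ x, |f x - g x| ∂μ) * (Real.log (1 + ∫ x, |f x - g x| ∂μ) - 1) + 1 ∧
    (1 + ∫ x, |f x - g x| ∂μ) * (Real.log (1 + ∫ x, |f x - g x| ∂μ) - 1) + 1
      ≤ ∫ x, (f x * Real.log (f x / g x) - f x + g x) ∂μ :=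
  generalized_csiszar_kullback_general μ f g hf hg hg0 hgint hf0 hent
end

section
/- Let λ > 0, F ≥ 0, H > 0, and let w : [0,∞) → ℝ≥0 be differentiable and satisfy w'(t) ≤ F − 2λ·w(t) + H·w(t)³ whenever w(t) ≤ √(λ/H). If w(0) + F/λ < √(λ/H), then w(t) ≤ w(0)·e^{−λt} + F/λ < √(λ/H) for all t ≥ 0. -/
/-! Below the threshold `√(λ/H)` the cubic term is absorbed, `H w³ ≤ λ w`, so there `w` obeys the
linear inequality `w' ≤ F - λ w`. The solution `w 0 e^{-λt} + F/λ` of `y' = F - λ y` never exceeds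
`w 0 + F/λ`, which lies strictly below the threshold; a fencing argument against this barrier (with
`F` raised slightly to make the comparison strict) shows that `w` can never reach the threshold. -/

open Real Set Filter Topology

theorem mul_pow_three_le_of_le_sqrt_div {lam H x : ℝ} (hlam : 0 ≤ lam) (hH : 0 < H) (hx : 0 ≤ x)
    (hxle : x ≤ √(lam / H)) : H * x ^ 3 ≤ lam * x := by
  have hsq : x ^ 2 ≤ lam / H := (sq_le_sq₀ hx (sqrt_nonneg _)).2 hxle |>.trans_eq
    (sq_sqrt (div_nonneg hlam hH.le))
  have hHsq : H * x ^ 2 ≤ lam := by rwa [le_div_iff₀' hH] at hsq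
  calc H * x ^ 3 = (H * x ^ 2) * x := by ring
    _ ≤ lam * x := mul_le_mul_of_nonneg_right hHsq hx

theorem hasDerivAt_mul_exp_neg_mul_add (c lam C x : ℝ) :
    HasDerivAt (fun s => c * exp (-lam * s) + C) (-lam * (c * exp (-lam * x))) x := by
  refine ((((hasDerivAt_id x).const_mul (-lam)).exp.const_mul c).add_const C).congr_deriv ?_
  simp only [id]
  ring

theorem exp_neg_mul_le_one {lam t : ℝ} (hlam : 0 ≤ lam) (ht : 0 ≤ t) : exp (-lam * t) ≤ 1 :=
  exp_le_one_iff.2 (by nlinarith)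

theorem mul_exp_neg_mul_add_le {c lam C t : ℝ} (hc : 0 ≤ c) (hlam : 0 ≤ lam) (ht : 0 ≤ t) :
    c * exp (-lam * t) + C ≤ c + C := by
  nlinarith [exp_neg_mul_le_one hlam ht]

section Fencing

variable {f : ℝ → ℝ} {lam F M c : ℝ}

theorem le_mul_exp_neg_mul_add_of_deriv_lt (hlam : 0 < lam) (hf : Differentiable ℝ f)
    (hc : 0 ≤ c) (h0 : f 0 ≤ c + F / lam) (hM : c + F / lam ≤ M)
    (hderiv : ∀ x, 0 ≤ x → f x ≤ M → deriv f x < F - lam * f x) {t : ℝ} (ht : 0 ≤ t) :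
    f t ≤ c * exp (-lam * t) + F / lam := by
  refine image_le_of_deriv_right_lt_deriv_boundary (hf.continuous.continuousOn)
    (fun x _ => (hf x).hasDerivAt.hasDerivWithinAt)
    (by simpa using h0) (hasDerivAt_mul_exp_neg_mul_add c lam (F / lam)) ?_ ⟨ht, le_rfl⟩
  rintro x ⟨hx, -⟩ hfx
  have hbelow : f x ≤ M := hfx ▸ (mul_exp_neg_mul_add_le hc hlam.le hx).trans hM
  calc deriv f x < F - lam * f x := hderiv x hx hbelow
    _ = -lam * (c * exp (-lam * x)) := by rw [hfx]; field_simp; ring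

theorem le_mul_exp_neg_mul_add_of_deriv_le (hlam : 0 < lam) (hf : Differentiable ℝ f)
    (hc : 0 ≤ c) (h0 : f 0 ≤ c + F / lam) (hM : c + F / lam < M)
    (hderiv : ∀ x, 0 ≤ x → f x ≤ M → deriv f x ≤ F - lam * f x) {t : ℝ} (ht : 0 ≤ t) :
    f t ≤ c * exp (-lam * t) + F / lam := by
  have hF : F < lam * (M - c) := by rw [← div_lt_iff₀' hlam]; linarith
  have hbound : ∀ᶠ G in 𝓝[>] F, f t ≤ c * exp (-lam * t) + G / lam := by
    filter_upwards [Ioo_mem_nhdsGT hF] with G ⟨hFG, hGM⟩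
    have hFG' : F / lam < G / lam := div_lt_div_of_pos_right hFG hlam
    refine le_mul_exp_neg_mul_add_of_deriv_lt hlam hf hc (by linarith) ?_
      (fun x hx hfx => (hderiv x hx hfx).trans_lt (by linarith)) ht
    rw [← le_sub_iff_add_le', div_le_iff₀ hlam]
    linarith
  refine ge_of_tendsto ?_ hbound
  exact (tendsto_const_nhds.add (tendsto_id.div_const lam)).mono_left nhdsWithin_le_nhds

end Fencing

theorem cubic_bootstrap (lam F H : ℝ) (hlam : 0 < lam) (hF : 0 ≤ F) (hH : 0 < H)
    (w : ℝ → ℝ) (hw : Differentiable ℝ w) (hwnn : ∀ t, 0 ≤ t → 0 ≤ w t)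
    (hineq : ∀ t, 0 ≤ t → w t ≤ Real.sqrt (lam / H) →
      deriv w t ≤ F - 2 * lam * w t + H * (w t) ^ 3)
    (hsmall : w 0 + F / lam < Real.sqrt (lam / H)) :
    ∀ t, 0 ≤ t →
      w t ≤ w 0 * Real.exp (-lam * t) + F / lam ∧
      w 0 * Real.exp (-lam * t) + F / lam < Real.sqrt (lam / H) := by
  intro t ht
  have hw0 : 0 ≤ w 0 := hwnn 0 le_rfl
  have hlinear : ∀ x, 0 ≤ x → w x ≤ √(lam / H) → deriv w x ≤ F - lam * w x := fun x hx hwx => by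
    linarith [hineq x hx hwx, mul_pow_three_le_of_le_sqrt_div hlam.le hH (hwnn x hx) hwx]
  exact ⟨le_mul_exp_neg_mul_add_of_deriv_le hlam hw hw0
    (le_add_of_nonneg_right (div_nonneg hF hlam.le)) hsmall hlinear ht,
    (mul_exp_neg_mul_add_le hw0 hlam.le ht).trans_lt hsmall⟩
end

section
/- Let λ > 0, ε ≥ 0, G, H > 0, and let w : [0,∞) → ℝ≥0 be differentiable and satisfy w'(t) ≤ ε − 2λ·w(t) + G·w(t)² + H·w(t)³ whenever G·w(t) + H·w(t)² ≤ λ. Suppose w(0) and ε are small enough that G·(w(0) + ε/λ) + H·(w(0) + ε/λ)² ≤ λ. Then w(t) ≤ w(0) + ε/λ for all t ≥ 0. -/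
/-!
While `G w + H w² ≤ λ`, the differential inequality gives `w' ≤ ε - λ w`, so the constant
`M = w 0 + ε / λ` acts as a barrier: the drift `ε - 2λM + GM² + HM³` is at most `-λ w 0 ≤ 0`.
When it is negative, `w` cannot cross `M`. When it vanishes, `w 0 = 0` and `ε = λM`, and
either `M = 0` or `GM + HM² = λ`; then the drift is negative at every level slightly above `0`,
resp. slightly below `M`, and `w` stays below all these levels.
-/

open Set Filter Topology

theorem le_of_deriv_neg_of_eq {w : ℝ → ℝ} (hw : Differentiable ℝ w) {a b y : ℝ} (hab : a ≤ b)
    (ha : w a ≤ y) (hder : ∀ x ∈ Ico a b, w x = y → deriv w x < 0) : w b ≤ y :=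
  image_le_of_deriv_right_lt_deriv_boundary (B := fun _ => y) (B' := fun _ => 0)
    hw.continuous.continuousOn (fun x _ => (hw x).hasDerivAt.hasDerivWithinAt) ha
    (fun _ => hasDerivAt_const _ _) hder ⟨hab, le_rfl⟩

/-- A level at which the differential inequality applies and forces `w` to decrease. -/
def IsBarrierLevel (lam eps G H y : ℝ) : Prop :=
  G * y + H * y ^ 2 ≤ lam ∧ eps - 2 * lam * y + G * y ^ 2 + H * y ^ 3 < 0

theorem drift_le_of_mem_region {lam eps G H y : ℝ} (hy : 0 ≤ y) (hreg : G * y + H * y ^ 2 ≤ lam) :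
    eps - 2 * lam * y + G * y ^ 2 + H * y ^ 3 ≤ eps - lam * y := by
  nlinarith [mul_le_mul_of_nonneg_left hreg hy]

theorem eventually_isBarrierLevel_nhdsGT_zero {lam G H : ℝ} (hlam : 0 < lam) :
    ∀ᶠ y in 𝓝[>] 0, 0 < y ∧ IsBarrierLevel lam 0 G H y := by
  have hcont : Tendsto (fun y : ℝ => G * y + H * y ^ 2) (𝓝 0) (𝓝 0) := by
    simpa using (show Continuous fun y : ℝ => G * y + H * y ^ 2 by fun_prop).tendsto 0
  filter_upwards [nhdsWithin_le_nhds (hcont.eventually_lt_const hlam), self_mem_nhdsWithin]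
    with y hreg (hy : 0 < y)
  refine ⟨hy, hreg.le, ?_⟩
  have : 0 - 2 * lam * y + G * y ^ 2 + H * y ^ 3 = y * (G * y + H * y ^ 2 - 2 * lam) := by ring
  rw [this]
  exact mul_neg_of_pos_of_neg hy (by linarith)

theorem eventually_isBarrierLevel_nhdsLT {lam G H M : ℝ} (hG : 0 ≤ G) (hH : 0 < H) (hM : 0 < M)
    (hreg : G * M + H * M ^ 2 = lam) :
    ∀ᶠ y in 𝓝[<] M, 0 < y ∧ IsBarrierLevel lam (lam * M) G H y := by
  -- the drift factors as `(M - y) * g y` with `g M = -H M² < 0`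
  set g : ℝ → ℝ := fun y => -(H * M ^ 2) + (G + 3 * H * M) * (M - y) - H * (M - y) ^ 2
  have hg : Tendsto g (𝓝 M) (𝓝 (-(H * M ^ 2))) := by
    simpa [g] using (show Continuous g by fun_prop).tendsto M
  filter_upwards [nhdsWithin_le_nhds (hg.eventually_lt_const (neg_neg_of_pos (by positivity))),
    nhdsWithin_le_nhds (Ioi_mem_nhds hM), self_mem_nhdsWithin]
    with y (hgy : g y < 0) (hy : 0 < y) (hyM : y < M)
  refine ⟨hy, ?_, ?_⟩
  · rw [← hreg]
    gcongr
  · have : lam * M - 2 * lam * y + G * y ^ 2 + H * y ^ 3 = (M - y) * g y := by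
      subst hreg; ring
    rw [this]
    exact mul_neg_of_pos_of_neg (by linarith) hgy

section Barrier

variable {lam eps G H : ℝ} {w : ℝ → ℝ} (hw : Differentiable ℝ w)
  (hineq : ∀ t, 0 ≤ t → G * w t + H * (w t) ^ 2 ≤ lam →
    deriv w t ≤ eps - 2 * lam * w t + G * (w t) ^ 2 + H * (w t) ^ 3)
include hw hineq

theorem le_of_isBarrierLevel {y : ℝ} (hy : IsBarrierLevel lam eps G H y) (h0 : w 0 ≤ y)
    {t : ℝ} (ht : 0 ≤ t) : w t ≤ y := by
  refine le_of_deriv_neg_of_eq hw ht h0 fun x hx hwx => ?_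
  have := hineq x hx.1 (hwx ▸ hy.1)
  rw [hwx] at this
  linarith [hy.2]

theorem le_of_eventually_isBarrierLevel {l : Filter ℝ} [l.NeBot] {M : ℝ} (hl : l ≤ 𝓝 M)
    (hev : ∀ᶠ y in l, w 0 ≤ y ∧ IsBarrierLevel lam eps G H y) {t : ℝ} (ht : 0 ≤ t) : w t ≤ M :=
  ge_of_tendsto (tendsto_id'.2 hl) (hev.mono fun _ hy => le_of_isBarrierLevel hw hineq hy.2 hy.1 ht)

end Barrier

theorem quadratic_cubic_bootstrap (lam eps G H : ℝ) (hlam : 0 < lam) (heps : 0 ≤ eps)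
    (hG : 0 < G) (hH : 0 < H)
    (w : ℝ → ℝ) (hw : Differentiable ℝ w) (hwnn : ∀ t, 0 ≤ t → 0 ≤ w t)
    (hineq : ∀ t, 0 ≤ t → G * w t + H * (w t) ^ 2 ≤ lam →
      deriv w t ≤ eps - 2 * lam * w t + G * (w t) ^ 2 + H * (w t) ^ 3)
    (hsmall : G * (w 0 + eps / lam) + H * (w 0 + eps / lam) ^ 2 ≤ lam) :
    ∀ t, 0 ≤ t → w t ≤ w 0 + eps / lam := by
  intro t ht
  obtain ⟨M, hMdef⟩ : ∃ M, M = w 0 + eps / lam := ⟨_, rfl⟩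
  rw [← hMdef] at hsmall ⊢
  have hw0 : 0 ≤ w 0 := hwnn 0 le_rfl
  have hw0M : w 0 ≤ M := by rw [hMdef]; linarith [div_nonneg heps hlam.le]
  have hM : 0 ≤ M := hw0.trans hw0M
  have hlamM : lam * M = lam * w 0 + eps := by rw [hMdef]; field_simp
  have hdrift := drift_le_of_mem_region (eps := eps) hM hsmall
  rcases lt_or_ge (eps - 2 * lam * M + G * M ^ 2 + H * M ^ 3) 0 with hneg | hnonneg
  · exact le_of_isBarrierLevel hw hineq ⟨hsmall, hneg⟩ hw0M ht
  have hw00 : w 0 = 0 := by nlinarith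
  have hepsM : eps = lam * M := by rw [hlamM, hw00]; ring
  have hstart : ∀ y, 0 < y → w 0 ≤ y := fun y hy => by rw [hw00]; exact hy.le
  subst hepsM
  rcases hM.eq_or_lt with rfl | hMpos
  · rw [mul_zero] at hineq
    exact le_of_eventually_isBarrierLevel hw hineq nhdsWithin_le_nhds
      ((eventually_isBarrierLevel_nhdsGT_zero hlam).mono fun y hy => ⟨hstart y hy.1, hy.2⟩) ht
  · have hreg : G * M + H * M ^ 2 = lam := by nlinarith
    exact le_of_eventually_isBarrierLevel hw hineq nhdsWithin_le_nhds
      ((eventually_isBarrierLevel_nhdsLT hG.le hH hMpos hreg).mono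
        fun y hy => ⟨hstart y hy.1, hy.2⟩) ht
end
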